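/- If U ∈ SU(4) is a phase carrier up to a global phase, meaning for all θ₀, θ₁ ∈ ℝ there exist φ₀, φ₁ ∈ ℝ and c ∈ {1, -1, i, -i} such that U (Z_{θ₀} ⊗ Z_{θ₁}) = c (Z_{φ₀} ⊗ Z_{φ₁}) U, then U is an exact phase carrier (the equality holds with c = 1 for appropriately chosen φ₀, φ₁), and each row of U has exactly one nonzero entry, so the elementwise absolute value of U is a permutation matrix. -/

import Mathlib

open Complex Matrix Kronecker

noncomputable def Zgate (θ : ℝ) : Matrix (Fin 2) (Fin 2) ℂ :=
  !![exp (θ / 2 * I), 0; 0, exp (-(θ / 2) * I)]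

/-- A two-qubit gate is a phase carrier if `Z` rotations can be carried across it. -/
def IsPhaseCarrier (U : Matrix (Fin 2 × Fin 2) (Fin 2 × Fin 2) ℂ) : Prop :=
  ∀ θ₀ θ₁ : ℝ, ∃ φ₀ φ₁ : ℝ, U * (Zgate θ₀ ⊗ₖ Zgate θ₁) = (Zgate φ₀ ⊗ₖ Zgate φ₁) * U

/-!
Write `Z_{θ₀} ⊗ Z_{θ₁}` as the diagonal matrix with entries `exp (i r_j(θ))`, where
`r_{(a,b)}(θ) = (±θ₀ ± θ₁)/2`. Entrywise, the hypothesis says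
`U_ij ≠ 0 → e^{i r_j(θ)} = c e^{i r_i(φ)}`. At `θ = (2, 1)` the four phases are distinct, so every
row of `U` has at most one nonzero entry, and unitarity makes `U` a permutation `σ` times unimodular
phases. Since `r` is odd under flipping both bits, `e^{i r_{σ i}(θ)} e^{i r_{σ(flip i)}(θ)} = c²` is
`±1` for all `θ`, which forces `σ` to commute with the bit flip. Then `i ↦ r_{σ i}(θ)` is odd again,
hence equal to `r_i(φ)` for some `φ`, and the global phase disappears.
-/

namespace Matrix

variable {n R : Type*} [Fintype n] [DecidableEq n]

theorem apply_eq_of_mul_diagonal_eq_smul_diagonal_mul [CommRing R] [IsDomain R]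
    {U : Matrix n n R} {d d' : n → R} {c : R} (h : U * diagonal d = c • (diagonal d' * U))
    {i j : n} (hij : U i j ≠ 0) : d j = c * d' i := by
  have hij' := congr_fun₂ h i j
  rw [mul_diagonal, smul_apply, diagonal_mul, smul_eq_mul] at hij'
  exact mul_left_cancel₀ hij (by linear_combination hij')

theorem mul_diagonal_eq_diagonal_mul_of_apply_ne_zero [CommSemiring R] {U : Matrix n n R}
    {d d' : n → R} (h : ∀ i j, U i j ≠ 0 → d j = d' i) : U * diagonal d = diagonal d' * U := by
  ext i j
  rw [mul_diagonal, diagonal_mul]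
  by_cases hij : U i j = 0
  · simp [hij]
  · rw [h i j hij, mul_comm]

theorem exists_perm_norm_eq_ite_of_mem_unitaryGroup {𝕜 : Type*} [RCLike 𝕜] {U : Matrix n n 𝕜}
    (hU : U ∈ unitaryGroup n 𝕜) (h : ∀ i j j', U i j ≠ 0 → U i j' ≠ 0 → j = j') :
    ∃ σ : Equiv.Perm n, ∀ i j, ‖U i j‖ = if j = σ i then 1 else 0 := by
  have hrows : ∀ i i', ∑ j, U i j * star (U i' j) = if i = i' then 1 else 0 := fun i i' => by
    simpa [mul_apply, one_apply] using congr_fun₂ (mem_unitaryGroup_iff.mp hU) i i'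
  have hsupp : ∀ i, ∃ j, U i j ≠ 0 := fun i => by
    by_contra! h0
    simpa [h0] using hrows i i
  choose τ hτ using hsupp
  have hzero : ∀ i j, j ≠ τ i → U i j = 0 := fun i j hj =>
    by_contra fun hij => hj (h i j (τ i) hij (hτ i))
  have hrows' : ∀ i i', U i (τ i) * star (U i' (τ i)) = if i = i' then 1 else 0 := fun i i' => by
    rw [← hrows, Finset.sum_eq_single (τ i) (fun j _ hj => by rw [hzero i j hj, zero_mul])
      (by simp)]
  have hinj : Function.Injective τ := fun i i' hii' => by
    by_contra hne
    have hprod := hrows' i i'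
    rw [if_neg hne, hii'] at hprod
    exact mul_ne_zero (hii' ▸ hτ i) (star_ne_zero.mpr (hτ i')) hprod
  refine ⟨Equiv.ofBijective τ hinj.bijective_of_finite, fun i j => ?_⟩
  split_ifs with hj
  · subst hj
    have hsq : (‖U i (τ i)‖ : 𝕜) ^ 2 = 1 := by
      simpa [← RCLike.mul_conj] using hrows' i i
    exact (pow_eq_one_iff_of_nonneg (norm_nonneg _) two_ne_zero).mp (by exact_mod_cast hsq)
  · rw [hzero i j hj, norm_zero]

end Matrix

def zSign : Fin 2 → ℝ := ![1, -1]

noncomputable def zPhase (i : Fin 2 × Fin 2) (θ₀ θ₁ : ℝ) : ℝ :=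
  (zSign i.1 * θ₀ + zSign i.2 * θ₁) / 2

def flipBits (i : Fin 2 × Fin 2) : Fin 2 × Fin 2 := (i.1 + 1, i.2 + 1)

theorem zSign_add_one (a : Fin 2) : zSign (a + 1) = -zSign a := by
  fin_cases a <;> simp [zSign]

theorem zSign_mul_self (a : Fin 2) : zSign a * zSign a = 1 := by
  fin_cases a <;> simp [zSign]

theorem zPhase_flipBits (i : Fin 2 × Fin 2) (θ₀ θ₁ : ℝ) :
    zPhase (flipBits i) θ₀ θ₁ = -zPhase i θ₀ θ₁ := by
  simp only [zPhase, flipBits, zSign_add_one]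
  ring

theorem Zgate_eq_diagonal (θ : ℝ) :
    Zgate θ = diagonal fun a => exp ((zSign a * θ / 2 : ℝ) * I) := by
  ext a b
  fin_cases a <;> fin_cases b <;> simp [Zgate, zSign, neg_div]

theorem Zgate_kronecker_Zgate (θ₀ θ₁ : ℝ) :
    Zgate θ₀ ⊗ₖ Zgate θ₁ = diagonal fun i => exp (zPhase i θ₀ θ₁ * I) := by
  rw [Zgate_eq_diagonal, Zgate_eq_diagonal, diagonal_kronecker_diagonal]
  congr 1
  ext i
  rw [← exp_add, zPhase]
  push_cast
  ring_nf

theorem exists_zPhase_eq_of_odd {f : Fin 2 × Fin 2 → ℝ} (hf : ∀ i, f (flipBits i) = -f i) :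
    ∃ φ₀ φ₁, ∀ i, zPhase i φ₀ φ₁ = f i := by
  refine ⟨f (0, 0) + f (0, 1), f (0, 0) - f (0, 1), ?_⟩
  have h10 : f (1, 0) = -f (0, 1) := hf (0, 1)
  have h11 : f (1, 1) = -f (0, 0) := hf (0, 0)
  rintro ⟨a, b⟩
  fin_cases a <;> fin_cases b <;> simp [zPhase, zSign, h10, h11] <;> ring

theorem exp_zPhase_two_one_injective : Function.Injective fun i => exp (zPhase i 2 1 * I) := by
  have hbound : ∀ i, -Real.pi < zPhase i 2 1 ∧ zPhase i 2 1 ≤ Real.pi := by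
    have hπ := Real.pi_gt_three
    rintro ⟨a, b⟩
    fin_cases a <;> fin_cases b <;> norm_num [zPhase, zSign] <;> constructor <;> linarith
  intro i j hij
  have hre : zPhase i 2 1 = zPhase j 2 1 := by
    have hexp := exp_inj_of_neg_pi_lt_of_le_pi (by simpa using (hbound i).1)
      (by simpa using (hbound i).2) (by simpa using (hbound j).1) (by simpa using (hbound j).2) hij
    exact_mod_cast mul_right_cancel₀ I_ne_zero hexp
  revert hre
  obtain ⟨a, b⟩ := i
  obtain ⟨c, d⟩ := j
  fin_cases a <;> fin_cases b <;> fin_cases c <;> fin_cases d <;> norm_num [zPhase, zSign]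

theorem exists_zPhase_add_zPhase_eq_pi_div_two {j k : Fin 2 × Fin 2} (hk : k ≠ flipBits j) :
    ∃ θ₀ θ₁, zPhase j θ₀ θ₁ + zPhase k θ₀ θ₁ = Real.pi / 2 := by
  have hfin : ∀ a c : Fin 2, c ≠ a + 1 → c = a := by decide
  obtain ⟨a, b⟩ := j
  obtain ⟨c, d⟩ := k
  rw [flipBits, Ne, Prod.ext_iff, not_and_or] at hk
  rcases hk with h | h
  · refine ⟨zSign a * (Real.pi / 2), 0, ?_⟩
    simp only [hfin a c h, zPhase]
    linear_combination (Real.pi / 2) * zSign_mul_self a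
  · refine ⟨0, zSign b * (Real.pi / 2), ?_⟩
    simp only [hfin b d h, zPhase]
    linear_combination (Real.pi / 2) * zSign_mul_self b

theorem eq_flipBits_of_forall_exp_sq_eq_one {j k : Fin 2 × Fin 2}
    (h : ∀ θ₀ θ₁, exp (((zPhase j θ₀ θ₁ + zPhase k θ₀ θ₁ : ℝ) : ℂ) * I) ^ 2 = 1) :
    k = flipBits j := by
  by_contra hk
  obtain ⟨θ₀, θ₁, hθ⟩ := exists_zPhase_add_zPhase_eq_pi_div_two hk
  have hsq := h θ₀ θ₁
  rw [hθ, ofReal_div, ofReal_ofNat, exp_pi_div_two_mul_I, I_sq] at hsq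
  norm_num at hsq

def IsPhaseCarrierUpToGlobalPhase (U : Matrix (Fin 2 × Fin 2) (Fin 2 × Fin 2) ℂ) : Prop :=
  ∀ θ₀ θ₁ : ℝ, ∃ φ₀ φ₁ : ℝ, ∃ c : ℂ, c ∈ ({1, -1, I, -I} : Set ℂ) ∧
    U * (Zgate θ₀ ⊗ₖ Zgate θ₁) = c • ((Zgate φ₀ ⊗ₖ Zgate φ₁) * U)

namespace IsPhaseCarrierUpToGlobalPhase

variable {U : Matrix (Fin 2 × Fin 2) (Fin 2 × Fin 2) ℂ}

theorem exists_exp_zPhase_eq (h : IsPhaseCarrierUpToGlobalPhase U) (θ₀ θ₁ : ℝ) :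
    ∃ φ₀ φ₁ : ℝ, ∃ c : ℂ, c ^ 4 = 1 ∧
      ∀ i j, U i j ≠ 0 → exp (zPhase j θ₀ θ₁ * I) = c * exp (zPhase i φ₀ φ₁ * I) := by
  obtain ⟨φ₀, φ₁, c, hc, hU⟩ := h θ₀ θ₁
  rw [Zgate_kronecker_Zgate, Zgate_kronecker_Zgate] at hU
  refine ⟨φ₀, φ₁, c, ?_, fun i j => apply_eq_of_mul_diagonal_eq_smul_diagonal_mul hU⟩
  rcases hc with rfl | rfl | rfl | rfl <;> norm_num [pow_succ, I_mul_I]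

theorem eq_of_apply_ne_zero (h : IsPhaseCarrierUpToGlobalPhase U) {i j j' : Fin 2 × Fin 2}
    (hj : U i j ≠ 0) (hj' : U i j' ≠ 0) : j = j' := by
  obtain ⟨φ₀, φ₁, c, -, hphase⟩ := h.exists_exp_zPhase_eq 2 1
  exact exp_zPhase_two_one_injective ((hphase i j hj).trans (hphase i j' hj').symm)

theorem eq_flipBits_of_apply_ne_zero (h : IsPhaseCarrierUpToGlobalPhase U)
    {i j k : Fin 2 × Fin 2} (hj : U i j ≠ 0) (hk : U (flipBits i) k ≠ 0) : k = flipBits j := by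
  refine eq_flipBits_of_forall_exp_sq_eq_one fun θ₀ θ₁ => ?_
  obtain ⟨φ₀, φ₁, c, hc, hphase⟩ := h.exists_exp_zPhase_eq θ₀ θ₁
  have hcancel : exp (zPhase i φ₀ φ₁ * I) * exp (zPhase (flipBits i) φ₀ φ₁ * I) = 1 := by
    rw [← exp_add, zPhase_flipBits, ofReal_neg, neg_mul, add_neg_cancel, exp_zero]
  calc exp (((zPhase j θ₀ θ₁ + zPhase k θ₀ θ₁ : ℝ) : ℂ) * I) ^ 2
      = (exp (zPhase j θ₀ θ₁ * I) * exp (zPhase k θ₀ θ₁ * I)) ^ 2 := by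
        rw [← exp_add, ofReal_add, add_mul]
    _ = c ^ 4 * (exp (zPhase i φ₀ φ₁ * I) * exp (zPhase (flipBits i) φ₀ φ₁ * I)) ^ 2 := by
        rw [hphase i j hj, hphase _ k hk]; ring
    _ = 1 := by rw [hc, hcancel]; ring

end IsPhaseCarrierUpToGlobalPhase

theorem phase_carrier_up_to_global_phase (U : Matrix (Fin 2 × Fin 2) (Fin 2 × Fin 2) ℂ)
    (hU : U ∈ Matrix.specialUnitaryGroup (Fin 2 × Fin 2) ℂ)
    (h : ∀ θ₀ θ₁ : ℝ, ∃ φ₀ φ₁ : ℝ, ∃ c : ℂ, c ∈ ({1, -1, I, -I} : Set ℂ) ∧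
      U * (Zgate θ₀ ⊗ₖ Zgate θ₁) = c • ((Zgate φ₀ ⊗ₖ Zgate φ₁) * U)) :
    IsPhaseCarrier U ∧
      (∀ i : Fin 2 × Fin 2, ∃! j : Fin 2 × Fin 2, U i j ≠ 0) ∧
      (∃ π : Equiv.Perm (Fin 2 × Fin 2),
        ∀ i j : Fin 2 × Fin 2, ‖U i j‖ = if i = π j then 1 else 0) := by
  have h : IsPhaseCarrierUpToGlobalPhase U := h
  obtain ⟨σ, hσ⟩ := exists_perm_norm_eq_ite_of_mem_unitaryGroup
    (mem_specialUnitaryGroup_iff.mp hU).1 fun _ _ _ => h.eq_of_apply_ne_zero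
  have hsupp : ∀ i j, U i j ≠ 0 ↔ j = σ i := fun i j => by
    rw [← norm_ne_zero_iff, hσ]
    split_ifs <;> simpa
  have hflip : ∀ i, σ (flipBits i) = flipBits (σ i) := fun i =>
    h.eq_flipBits_of_apply_ne_zero ((hsupp _ _).2 rfl) ((hsupp _ _).2 rfl)
  refine ⟨fun θ₀ θ₁ => ?_, fun i => ⟨σ i, (hsupp i _).2 rfl, fun j => (hsupp i j).1⟩, σ.symm,
    fun i j => ?_⟩
  · obtain ⟨φ₀, φ₁, hφ⟩ := exists_zPhase_eq_of_odd (f := fun i => zPhase (σ i) θ₀ θ₁)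
      fun i => by simp only [hflip, zPhase_flipBits]
    refine ⟨φ₀, φ₁, ?_⟩
    rw [Zgate_kronecker_Zgate, Zgate_kronecker_Zgate]
    exact mul_diagonal_eq_diagonal_mul_of_apply_ne_zero fun i j hij => by
      rw [(hsupp i j).1 hij, hφ]
  · simp only [hσ, Equiv.eq_symm_apply, eq_comm]
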